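/- (Kolmogorov-type inequality for 1 ≤ p ≤ 2.) Let X₁,…,Xₙ be independent real random variables on a probability space with E[Xₖ] ≤ 0 for each k, and let Sₖ = X₁ + ⋯ + Xₖ. Then for 1 ≤ p ≤ 2, E[ (max_{k≤n} (Sₙ − Sₖ))^p ] ≤ 2^{2−p} Σ_{k=1}^n E[|Xₖ|^p], where the maximum is over k = 0,1,…,n (with S₀ = 0), provided all moments involved are finite. -/

import Mathlib

/-!
`W_n = max_k (S_n - S_k)` obeys Lindley's recursion `W_{n+1} = max (W_n + X_n) 0`, and `W_n`
depends only on `X_0, …, X_{n-1}`, hence is independent of `X_n`. For `m ≥ 0` and `1 ≤ p ≤ 2`,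
`max (m + x) 0 ^ p ≤ m ^ p + p m ^ (p-1) x + |x| ^ p`: write `(a + b) ^ p - a ^ p` as
`p ∫₀ᵇ (a + s) ^ (p-1) ds` and bound the integrand using the subadditivity of `t ↦ t ^ (p-1)`.
Taking expectations with `m = W_n`, `x = X_n`, the cross term factors as
`p E[W_n ^ (p-1)] E[X_n] ≤ 0`, so `E W_{n+1} ^ p ≤ E W_n ^ p + E |X_n| ^ p`. Summing gives the
inequality with the constant `1 ≤ 2 ^ (2-p)`.
-/

open MeasureTheory ProbabilityTheory Finset

section RpowExpansion

open intervalIntegral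

variable {p a b : ℝ}

lemma rpow_add_eq_rpow_add_integral (hp : 0 < p) (a b : ℝ) :
    (a + b) ^ p = a ^ p + p * ∫ s in 0..b, (a + s) ^ (p - 1) := by
  rw [integral_comp_add_left (fun t => t ^ (p - 1)),
    integral_rpow (Or.inl (by linarith)), sub_add_cancel, add_zero]
  field_simp
  ring

lemma integral_rpow_sub_one (hp : 0 < p) (b : ℝ) : ∫ s in 0..b, s ^ (p - 1) = b ^ p / p := by
  rw [integral_rpow (Or.inl (by linarith)), sub_add_cancel, Real.zero_rpow hp.ne', sub_zero]

lemma continuous_rpow_sub_one (hp : 1 ≤ p) : Continuous fun s : ℝ => s ^ (p - 1) :=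
  Real.continuous_rpow_const (by linarith)

lemma rpow_add_le_rpow_add_mul_add_rpow (hp1 : 1 ≤ p) (hp2 : p ≤ 2) (ha : 0 ≤ a) (hb : 0 ≤ b) :
    (a + b) ^ p ≤ a ^ p + p * a ^ (p - 1) * b + b ^ p := by
  have hp0 : 0 < p := by linarith
  have hmono : ∫ s in 0..b, (a + s) ^ (p - 1) ≤ ∫ s in 0..b, (a ^ (p - 1) + s ^ (p - 1)) :=
    integral_mono_on hb
      (((continuous_rpow_sub_one hp1).comp (continuous_const_add a)).intervalIntegrable _ _)
      ((continuous_const.add (continuous_rpow_sub_one hp1)).intervalIntegrable _ _)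
      fun s hs => Real.rpow_add_le_add_rpow ha hs.1 (by linarith) (by linarith)
  rw [integral_add intervalIntegrable_const ((continuous_rpow_sub_one hp1).intervalIntegrable _ _),
    intervalIntegral.integral_const, integral_rpow_sub_one hp0, smul_eq_mul, sub_zero] at hmono
  calc (a + b) ^ p = a ^ p + p * ∫ s in 0..b, (a + s) ^ (p - 1) :=
        rpow_add_eq_rpow_add_integral hp0 a b
    _ ≤ a ^ p + p * (b * a ^ (p - 1) + b ^ p / p) := by gcongr
    _ = a ^ p + p * a ^ (p - 1) * b + b ^ p := by field_simp; ring

lemma rpow_add_mul_le_rpow_add (hp1 : 1 ≤ p) (ha : 0 ≤ a) (hb : 0 ≤ b) :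
    a ^ p + p * a ^ (p - 1) * b ≤ (a + b) ^ p := by
  have hp0 : 0 < p := by linarith
  have hmono : ∫ _ in 0..b, a ^ (p - 1) ≤ ∫ s in 0..b, (a + s) ^ (p - 1) :=
    integral_mono_on hb intervalIntegrable_const
      (((continuous_rpow_sub_one hp1).comp (continuous_const_add a)).intervalIntegrable _ _)
      fun s hs => Real.rpow_le_rpow ha (by linarith [hs.1]) (by linarith)
  rw [intervalIntegral.integral_const, smul_eq_mul, sub_zero] at hmono
  calc a ^ p + p * a ^ (p - 1) * b = a ^ p + p * (b * a ^ (p - 1)) := by ring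
    _ ≤ a ^ p + p * ∫ s in 0..b, (a + s) ^ (p - 1) := by gcongr
    _ = (a + b) ^ p := (rpow_add_eq_rpow_add_integral hp0 a b).symm

lemma rpow_add_mul_rpow_add_le (hp1 : 1 ≤ p) (hp2 : p ≤ 2) (ha : 0 ≤ a) (hb : 0 ≤ b) :
    a ^ p + p * (a + b) ^ (p - 1) * b ≤ (a + b) ^ p + b ^ p := by
  have hp0 : 0 < p := by linarith
  have hrefl : IntervalIntegrable (fun s => (b - s) ^ (p - 1)) volume 0 b :=
    ((continuous_rpow_sub_one hp1).comp (continuous_sub_left b)).intervalIntegrable _ _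
  have hmono : ∫ s in 0..b, ((a + b) ^ (p - 1) - (b - s) ^ (p - 1)) ≤
      ∫ s in 0..b, (a + s) ^ (p - 1) :=
    integral_mono_on hb (intervalIntegrable_const.sub hrefl)
      (((continuous_rpow_sub_one hp1).comp (continuous_const_add a)).intervalIntegrable _ _)
      fun s hs => by
        have := Real.rpow_add_le_add_rpow (by linarith [hs.1] : 0 ≤ a + s)
          (by linarith [hs.2] : 0 ≤ b - s) (p := p - 1) (by linarith) (by linarith)
        rw [show a + s + (b - s) = a + b by ring] at this
        linarith
  rw [integral_sub intervalIntegrable_const hrefl, intervalIntegral.integral_const,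
    integral_comp_sub_left (fun s => s ^ (p - 1)), sub_self, sub_zero,
    integral_rpow_sub_one hp0, smul_eq_mul] at hmono
  calc a ^ p + p * (a + b) ^ (p - 1) * b
      = a ^ p + p * (b * (a + b) ^ (p - 1) - b ^ p / p) + b ^ p := by field_simp; ring
    _ ≤ a ^ p + p * (∫ s in 0..b, (a + s) ^ (p - 1)) + b ^ p := by gcongr
    _ = (a + b) ^ p + b ^ p := by rw [rpow_add_eq_rpow_add_integral hp0 a b]

lemma max_add_zero_rpow_le (hp1 : 1 ≤ p) (hp2 : p ≤ 2) {m : ℝ} (hm : 0 ≤ m) (x : ℝ) :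
    max (m + x) 0 ^ p ≤ m ^ p + p * m ^ (p - 1) * x + |x| ^ p := by
  rcases le_total 0 x with hx | hx
  · rw [max_eq_left (by linarith), abs_of_nonneg hx]
    exact rpow_add_le_rpow_add_mul_add_rpow hp1 hp2 hm hx
  rcases le_total 0 (m + x) with hmx | hmx
  · rw [max_eq_left hmx, abs_of_nonpos hx]
    have := rpow_add_mul_rpow_add_le hp1 hp2 hmx (by linarith : 0 ≤ -x)
    rw [add_neg_cancel_right] at this
    linarith
  · rw [max_eq_right hmx, abs_of_nonpos hx, Real.zero_rpow (by linarith)]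
    have := rpow_add_mul_le_rpow_add hp1 hm (by linarith : 0 ≤ -x - m)
    rw [add_sub_cancel] at this
    have hmp : m ^ (p - 1) * m = m ^ p := by
      rw [← Real.rpow_add_one' hm (by linarith), sub_add_cancel]
    nlinarith [Real.rpow_nonneg hm p]

end RpowExpansion

noncomputable def lindley (v : ℕ → ℝ) : ℕ → ℝ
  | 0 => 0
  | n + 1 => max (lindley v n + v n) 0

lemma lindley_nonneg (v : ℕ → ℝ) : ∀ n, 0 ≤ lindley v n
  | 0 => le_rfl
  | _ + 1 => le_max_right _ _

lemma lindley_congr {v w : ℕ → ℝ} {n : ℕ} (h : ∀ j < n, v j = w j) :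
    lindley v n = lindley w n := by
  induction n with
  | zero => rfl
  | succ n ih =>
    simp only [lindley, ih fun j hj => h j (by omega), h n (by omega)]

lemma measurable_lindley (n : ℕ) : Measurable fun v : ℕ → ℝ => lindley v n := by
  induction n with
  | zero => exact measurable_const
  | succ n ih => exact (ih.add (measurable_pi_apply n)).max measurable_const

lemma isGreatest_lindley (v : ℕ → ℝ) (n : ℕ) :
    IsGreatest (Set.range fun k : Fin (n + 1) => (∑ j ∈ range n, v j) - ∑ j ∈ range k, v j)
      (lindley v n) := by
  induction n with
  | zero => exact ⟨⟨0, by simp [lindley]⟩, by rintro _ ⟨k, rfl⟩; simp [lindley]⟩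
  | succ n ih =>
    obtain ⟨⟨k, hk⟩, hub⟩ := ih
    refine ⟨?_, ?_⟩
    · rcases max_cases (lindley v n + v n) 0 with ⟨h, _⟩ | ⟨h, _⟩
      · refine ⟨k.castSucc, ?_⟩
        rw [lindley, h, ← hk]
        simp only [sum_range_succ, Fin.val_castSucc]
        ring
      · exact ⟨Fin.last _, by simp [lindley, h]⟩
    · rintro _ ⟨k, rfl⟩
      induction k using Fin.lastCases with
      | last => simp [lindley]
      | cast i =>
        have := hub ⟨i, rfl⟩
        simp only [lindley, sum_range_succ, Fin.val_castSucc] at this ⊢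
        exact le_max_of_le_left (by linarith)

lemma lindley_eq_iSup (v : ℕ → ℝ) (n : ℕ) :
    lindley v n = ⨆ k : Fin (n + 1), ((∑ j ∈ range n, v j) - ∑ j ∈ range k, v j) :=
  (isGreatest_lindley v n).csSup_eq.symm

section Probability

variable {Ω : Type*} [MeasurableSpace Ω] {μ : Measure Ω} {p : ℝ}

lemma MeasureTheory.MemLp.integrable_abs_rpow [IsFiniteMeasure μ] {f : Ω → ℝ}
    (hf : MemLp f (ENNReal.ofReal p) μ) (hp : 0 ≤ p) : Integrable (fun ω => |f ω| ^ p) μ := by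
  simpa [ENNReal.toReal_ofReal hp] using hf.integrable_norm_rpow'

lemma integral_max_add_zero_rpow_le [IsFiniteMeasure μ] (hp1 : 1 ≤ p) (hp2 : p ≤ 2)
    {M Z : Ω → ℝ} (hM0 : ∀ ω, 0 ≤ M ω) (hM : MemLp M (ENNReal.ofReal p) μ)
    (hZ : MemLp Z (ENNReal.ofReal p) μ) (hMZ : IndepFun M Z μ) (hZmean : ∫ ω, Z ω ∂μ ≤ 0) :
    ∫ ω, max (M ω + Z ω) 0 ^ p ∂μ ≤ ∫ ω, M ω ^ p ∂μ + ∫ ω, |Z ω| ^ p ∂μ := by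
  have habsM : ∀ q : ℝ, (fun ω => |M ω| ^ q) = fun ω => M ω ^ q := fun q => by
    simp only [abs_of_nonneg (hM0 _)]
  have hMp : Integrable (fun ω => M ω ^ p) μ := habsM p ▸ hM.integrable_abs_rpow (by linarith)
  have hMq : Integrable (fun ω => M ω ^ (p - 1)) μ := habsM (p - 1) ▸
    (hM.mono_exponent (ENNReal.ofReal_le_ofReal (by linarith))).integrable_abs_rpow (by linarith)
  have hZp : Integrable (fun ω => |Z ω| ^ p) μ := hZ.integrable_abs_rpow (by linarith)
  have hZ1 : Integrable Z μ := hZ.integrable (ENNReal.one_le_ofReal.2 hp1)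
  have hind : IndepFun (fun ω => M ω ^ (p - 1)) Z μ :=
    hMZ.comp (continuous_rpow_sub_one hp1).measurable measurable_id
  have hcross : ∫ ω, M ω ^ (p - 1) * Z ω ∂μ ≤ 0 := by
    rw [hind.integral_fun_mul_eq_mul_integral hMq.1 hZ1.1]
    exact mul_nonpos_of_nonneg_of_nonpos (integral_nonneg fun ω => Real.rpow_nonneg (hM0 ω) _)
      hZmean
  have hprod : Integrable (fun ω => p * (M ω ^ (p - 1) * Z ω)) μ :=
    (hind.integrable_mul hMq hZ1).const_mul p
  have hsum : Integrable (fun ω => M ω ^ p + p * (M ω ^ (p - 1) * Z ω)) μ := hMp.add hprod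
  calc ∫ ω, max (M ω + Z ω) 0 ^ p ∂μ
      ≤ ∫ ω, (M ω ^ p + p * (M ω ^ (p - 1) * Z ω) + |Z ω| ^ p) ∂μ := by
        refine integral_mono_of_nonneg (.of_forall fun ω => ?_) (hsum.add hZp)
          (.of_forall fun ω => ?_)
        · exact Real.rpow_nonneg (le_max_right _ _) p
        · simpa only [mul_assoc] using max_add_zero_rpow_le hp1 hp2 (hM0 ω) (Z ω)
    _ = ∫ ω, M ω ^ p ∂μ + p * ∫ ω, M ω ^ (p - 1) * Z ω ∂μ + ∫ ω, |Z ω| ^ p ∂μ := by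
        rw [integral_add hsum hZp, integral_add hMp hprod, integral_const_mul]
    _ ≤ ∫ ω, M ω ^ p ∂μ + ∫ ω, |Z ω| ^ p ∂μ := by
        linarith [mul_nonpos_of_nonneg_of_nonpos (by linarith : 0 ≤ p) hcross]

lemma memLp_lindley {q : ENNReal} {X : ℕ → Ω → ℝ} (hX : ∀ k, MemLp (X k) q μ) :
    ∀ n, MemLp (fun ω => lindley (X · ω) n) q μ
  | 0 => MemLp.zero
  | n + 1 => ((memLp_lindley hX n).add (hX n)).pos_part

lemma ProbabilityTheory.iIndepFun.indepFun_lindley {X : ℕ → Ω → ℝ}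
    (hX : ∀ k, AEMeasurable (X k) μ) (hindep : iIndepFun X μ) (n : ℕ) :
    IndepFun (fun ω => lindley (X · ω) n) (X n) μ := by
  have hpast := hindep.indepFun_finset₀ (range n) {n} (by simp) hX
  have hlindley : Measurable fun v : range n → ℝ =>
      lindley (fun j => if h : j ∈ range n then v ⟨j, h⟩ else 0) n :=
    (measurable_lindley n).comp (measurable_pi_lambda _ fun j => by
      split_ifs
      exacts [measurable_pi_apply _, measurable_const])
  convert hpast.comp hlindley (measurable_pi_apply ⟨n, mem_singleton_self n⟩) using 1
  · funext ω
    exact lindley_congr fun j hj => by simp [mem_range.2 hj]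
  · rfl

lemma integral_lindley_rpow_le [IsFiniteMeasure μ] (hp1 : 1 ≤ p) (hp2 : p ≤ 2)
    {X : ℕ → Ω → ℝ} (hindep : iIndepFun X μ) (hmem : ∀ k, MemLp (X k) (ENNReal.ofReal p) μ)
    (hmean : ∀ k, ∫ ω, X k ω ∂μ ≤ 0) (n : ℕ) :
    ∫ ω, lindley (X · ω) n ^ p ∂μ ≤ ∑ k ∈ range n, ∫ ω, |X k ω| ^ p ∂μ := by
  induction n with
  | zero => simp [lindley, Real.zero_rpow (by linarith : p ≠ 0)]
  | succ n ih =>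
    rw [sum_range_succ]
    have hstep := integral_max_add_zero_rpow_le hp1 hp2 (fun ω => lindley_nonneg _ n)
      (memLp_lindley hmem n) (hmem n)
      (hindep.indepFun_lindley (fun k => (hmem k).1.aemeasurable) n) (hmean n)
    exact hstep.trans (by linarith)

end Probability

/-- Kolmogorov-type inequality for `1 ≤ p ≤ 2`: for independent random variables with
nonpositive means and finite `p`-th moments,
`E[(max_{0≤k≤n} (S_n − S_k))^p] ≤ 2^{2−p} Σ_{k<n} E|X_k|^p`. -/
theorem kolmogorov_type_inequality
    {Ω : Type*} [MeasurableSpace Ω] (μ : Measure Ω) [IsProbabilityMeasure μ]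
    (p : ℝ) (hp1 : 1 ≤ p) (hp2 : p ≤ 2)
    (n : ℕ) (X : ℕ → Ω → ℝ)
    (hindep : iIndepFun X μ)
    (hmem : ∀ k, MemLp (X k) (ENNReal.ofReal p) μ)
    (hmean : ∀ k, ∫ ω, X k ω ∂μ ≤ 0) :
    ∫ ω, (⨆ k : Fin (n + 1),
        ((∑ j ∈ Finset.range n, X j ω) - ∑ j ∈ Finset.range (k : ℕ), X j ω)) ^ p ∂μ ≤
      2 ^ (2 - p) * ∑ k ∈ Finset.range n, ∫ ω, |X k ω| ^ p ∂μ := by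
  simp_rw [← lindley_eq_iSup]
  have hmoments : 0 ≤ ∑ k ∈ range n, ∫ ω, |X k ω| ^ p ∂μ :=
    sum_nonneg fun k _ => integral_nonneg fun ω => Real.rpow_nonneg (abs_nonneg _) p
  have hconst : (1 : ℝ) ≤ 2 ^ (2 - p) := Real.one_le_rpow one_le_two (by linarith)
  calc ∫ ω, lindley (X · ω) n ^ p ∂μ ≤ ∑ k ∈ range n, ∫ ω, |X k ω| ^ p ∂μ :=
        integral_lindley_rpow_le hp1 hp2 hindep hmem hmean n
    _ ≤ 2 ^ (2 - p) * ∑ k ∈ range n, ∫ ω, |X k ω| ^ p ∂μ := le_mul_of_one_le_left hmoments hconst
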